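/- Assume that a(t) ≥ 0 for all t ≥ 0 and a is Lebesgue integrable on [0,+∞); that there exists c > 0 such that for all indices j < i one has (i - j)/(τ_{i+1} - τ_j) ≥ c (equivalently τ_{i+1} - τ_j ≤ (i - j)/c); and that there exist θ, η ∈ (0,1) with η < |1 + b_k| ≤ θ for all k. Then there exist constants N > 0 and α₀ > 0 such that |u(t,s)| ≤ N · e^{-α₀(t-s)} for all t ≥ s ≥ 0; in particular the trivial solution of the corresponding scalar homogeneous generalized linear differential equation is uniformly asymptotically stable. -/

import Mathlib

/-!
On `[s, t)` the integral factor is at most `exp (∫₀^∞ a)`, while each impulse contributes a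
factor of modulus at most `θ < 1`. The gap condition says `τ n - τ m ≤ (n - m) / c`, so `[s, t)`
contains at least `c (t - s) - 1 - c τ₀` impulse times and the product of the jumps is at most
`θ ^ (c (t - s) - 1 - c τ₀)`, which decays exponentially in `t - s` at the rate `-c log θ`.
Uniform stability and uniform attractivity follow from any such exponential bound.
-/

/-- The transition function of the scalar impulsive equation `x' = a(t)x`, `Δ⁺x(τ_k) = b_k x(τ_k)`
(equivalently, of the corresponding scalar homogeneous generalized linear differential
equation): `u(t,s) = exp(∫_s^t a) · ∏_{k : τ_k ∈ [s,t)} (1 + b_k)`. -/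
noncomputable def transition (a : ℝ → ℝ) (τ b : ℕ → ℝ) (t s : ℝ) : ℝ :=
  Real.exp (∫ r in s..t, a r) * ∏ᶠ k ∈ {k : ℕ | s ≤ τ k ∧ τ k < t}, (1 + b k)

open Real Filter Topology MeasureTheory

/-- The solution of the scalar linear equation through `(s₀, x₀)` is `t ↦ u t s₀ * x₀`. -/
def UniformlyStable (u : ℝ → ℝ → ℝ) : Prop :=
  ∀ ε > (0 : ℝ), ∃ δ > (0 : ℝ), ∀ s₀ ≥ (0 : ℝ), ∀ x₀ : ℝ, |x₀| < δ →
    ∀ t ≥ s₀, |u t s₀ * x₀| < ε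

def UniformlyAttractive (u : ℝ → ℝ → ℝ) : Prop :=
  ∃ δ₀ > (0 : ℝ), ∀ ε > (0 : ℝ), ∃ T ≥ (0 : ℝ), ∀ s₀ ≥ (0 : ℝ), ∀ x₀ : ℝ, |x₀| < δ₀ →
    ∀ t ≥ s₀ + T, |u t s₀ * x₀| < ε

section ExpBound

variable {u : ℝ → ℝ → ℝ} {N α : ℝ}

lemma uniformlyStable_of_exp_bound (hN : 0 < N) (hα : 0 ≤ α)
    (hu : ∀ s t : ℝ, 0 ≤ s → s ≤ t → |u t s| ≤ N * exp (-α * (t - s))) :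
    UniformlyStable u := by
  intro ε hε
  refine ⟨ε / N, div_pos hε hN, fun s₀ hs₀ x₀ hx₀ t ht => ?_⟩
  have hdecay : exp (-α * (t - s₀)) ≤ 1 :=
    exp_le_one_iff.2 (mul_nonpos_of_nonpos_of_nonneg (neg_nonpos.2 hα) (sub_nonneg.2 ht))
  calc |u t s₀ * x₀| = |u t s₀| * |x₀| := abs_mul _ _
    _ ≤ N * |x₀| := by
        gcongr
        exact (hu s₀ t hs₀ ht).trans (mul_le_of_le_one_right hN.le hdecay)
    _ < N * (ε / N) := by gcongr
    _ = ε := mul_div_cancel₀ ε hN.ne'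

lemma uniformlyAttractive_of_exp_bound (hN : 0 < N) (hα : 0 < α)
    (hu : ∀ s t : ℝ, 0 ≤ s → s ≤ t → |u t s| ≤ N * exp (-α * (t - s))) :
    UniformlyAttractive u := by
  refine ⟨1, one_pos, fun ε hε => ?_⟩
  have hlim : Tendsto (fun T => N * exp (-α * T)) atTop (𝓝 0) := by
    simpa using (tendsto_exp_neg_atTop_nhds_zero.comp
      (tendsto_id.const_mul_atTop hα)).const_mul N
  obtain ⟨T, hTε, hT0⟩ :=
    ((hlim.eventually (gt_mem_nhds hε)).and (eventually_ge_atTop 0)).exists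
  refine ⟨T, hT0, fun s₀ hs₀ x₀ hx₀ t ht => ?_⟩
  calc |u t s₀ * x₀| = |u t s₀| * |x₀| := abs_mul _ _
    _ ≤ |u t s₀| := mul_le_of_le_one_right (abs_nonneg _) hx₀.le
    _ ≤ N * exp (-α * (t - s₀)) := hu s₀ t hs₀ (by linarith)
    _ ≤ N * exp (-α * T) := by gcongr N * exp ?_; nlinarith
    _ < ε := hTε

end ExpBound

lemma Monotone.exists_le_iff_le {α : Type*} [Preorder α] {τ : ℕ → α} (hτ : Monotone τ)
    {x : α} (h : ∃ k, x ≤ τ k) : ∃ J, ∀ k, J ≤ k ↔ x ≤ τ k := by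
  classical
  exact ⟨Nat.find h, fun k => ⟨fun hk => (Nat.find_spec h).trans (hτ hk), Nat.find_min' h⟩⟩

lemma Finset.abs_prod_le_pow_card {ι : Type*} (S : Finset ι) (f : ι → ℝ) {θ : ℝ}
    (h : ∀ k ∈ S, |f k| ≤ θ) : |∏ k ∈ S, f k| ≤ θ ^ S.card := by
  rw [Finset.abs_prod]
  exact (Finset.prod_le_prod (fun _ _ => abs_nonneg _) h).trans_eq (Finset.prod_const θ)

lemma pow_le_exp_mul_log {θ x : ℝ} {n : ℕ} (hθ0 : 0 < θ) (hθ1 : θ ≤ 1) (hx : x ≤ n) :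
    θ ^ n ≤ exp (x * log θ) :=
  calc θ ^ n = θ ^ (n : ℝ) := (rpow_natCast θ n).symm
    _ ≤ θ ^ x := rpow_le_rpow_of_exponent_ge hθ0 hθ1 hx
    _ = exp (x * log θ) := by rw [rpow_def_of_pos hθ0, mul_comm]

lemma intervalIntegral_le_integral_Ici {a : ℝ → ℝ} (hapos : ∀ t ≥ (0 : ℝ), 0 ≤ a t)
    (hint : IntegrableOn a (Set.Ici 0)) {s t : ℝ} (hs : 0 ≤ s) (hst : s ≤ t) :
    ∫ r in s..t, a r ≤ ∫ r in Set.Ici 0, a r := by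
  rw [intervalIntegral.integral_of_le hst]
  refine setIntegral_mono_set hint ?_ ?_
  · exact (ae_restrict_iff' measurableSet_Ici).2 (Eventually.of_forall hapos)
  · exact Eventually.of_forall fun r hr => hs.trans (Set.mem_Ioc.1 hr).1.le

lemma transition_eq_prod_Ico {a : ℝ → ℝ} {τ b : ℕ → ℝ} {s t : ℝ} {J K : ℕ}
    (hJ : ∀ k, J ≤ k ↔ s ≤ τ k) (hK : ∀ k, K ≤ k ↔ t ≤ τ k) :
    transition a τ b t s = exp (∫ r in s..t, a r) * ∏ k ∈ Finset.Ico J K, (1 + b k) := by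
  have hset : {k : ℕ | s ≤ τ k ∧ τ k < t} = ↑(Finset.Ico J K) := by
    ext k
    simp only [Set.mem_ofPred_eq, Finset.coe_Ico, Set.mem_Ico, ← hJ, ← not_le, ← hK]
  rw [transition, hset, finprod_mem_coe_finset]

section Impulses

variable {τ : ℕ → ℝ} {c : ℝ}

lemma mul_sub_le_of_gap (hτ : StrictMono τ) (hc : 0 ≤ c)
    (hgap : ∀ i j : ℕ, j < i → c ≤ ((i : ℝ) - (j : ℝ)) / (τ (i + 1) - τ j))
    {m n : ℕ} (hmn : m ≤ n) : c * (τ n - τ m) ≤ (n : ℝ) - m := by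
  rcases hmn.eq_or_lt with rfl | hlt
  · simp
  have h := (le_div_iff₀ (sub_pos.2 (hτ (Nat.lt_succ_of_lt hlt)))).1 (hgap n m hlt)
  nlinarith [hτ (Nat.lt_succ_self n)]

/-- `K - J` is the number of impulse times in `[s, t)`. -/
lemma mul_sub_le_card_Ico (hτ0 : 0 ≤ τ 0) (hc : 0 ≤ c)
    (hgap : ∀ m n : ℕ, m ≤ n → c * (τ n - τ m) ≤ (n : ℝ) - m)
    {s t : ℝ} {J K : ℕ} (hJ : ∀ k, J ≤ k ↔ s ≤ τ k) (hK : ∀ k, K ≤ k ↔ t ≤ τ k)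
    (hs : 0 ≤ s) (hst : s ≤ t) :
    c * (t - s) ≤ ((K - J : ℕ) : ℝ) + 1 + c * τ 0 := by
  have htK : t ≤ τ K := (hK K).1 le_rfl
  have hJK : J ≤ K := (hJ K).2 (hst.trans htK)
  rw [Nat.cast_sub hJK]
  cases J with
  | zero =>
    have hlen : c * (t - s) ≤ c * (τ K - τ 0) + c * τ 0 := by
      rw [← mul_add]; gcongr; linarith
    have := hgap 0 K hJK
    push_cast at this ⊢
    linarith
  | succ p =>
    have hp : τ p < s := lt_of_not_ge fun h => by have := (hJ p).2 h; omega
    have hlen : c * (t - s) ≤ c * (τ K - τ p) := by gcongr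
    have := hgap p K (by omega)
    push_cast
    linarith [mul_nonneg hc hτ0]

end Impulses

theorem exists_abs_transition_le_exp {a : ℝ → ℝ} {τ b : ℕ → ℝ} {c θ : ℝ}
    (hτmono : StrictMono τ) (hτ0 : 0 ≤ τ 0) (hτtop : Tendsto τ atTop atTop)
    (hapos : ∀ t ≥ (0 : ℝ), 0 ≤ a t) (hint : IntegrableOn a (Set.Ici 0)) (hc : 0 < c)
    (hgap : ∀ i j : ℕ, j < i → c ≤ ((i : ℝ) - (j : ℝ)) / (τ (i + 1) - τ j))
    (hθ0 : 0 < θ) (hθ1 : θ < 1) (hb : ∀ k, |1 + b k| ≤ θ) :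
    ∃ N > (0 : ℝ), ∃ α > (0 : ℝ), ∀ s t : ℝ, 0 ≤ s → s ≤ t →
      |transition a τ b t s| ≤ N * exp (-α * (t - s)) := by
  have hlogθ : log θ < 0 := log_neg hθ0 hθ1
  set A := ∫ r in Set.Ici 0, a r
  refine ⟨exp (A - (1 + c * τ 0) * log θ), exp_pos _, -(c * log θ),
    neg_pos.2 (mul_neg_of_pos_of_neg hc hlogθ), fun s t hs hst => ?_⟩
  obtain ⟨J, hJ⟩ := hτmono.monotone.exists_le_iff_le (hτtop.eventually_ge_atTop s).exists
  obtain ⟨K, hK⟩ := hτmono.monotone.exists_le_iff_le (hτtop.eventually_ge_atTop t).exists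
  have hcount := mul_sub_le_card_Ico hτ0 hc.le
    (fun m n => mul_sub_le_of_gap hτmono hc.le hgap) hJ hK hs hst
  have hprod : |∏ k ∈ Finset.Ico J K, (1 + b k)| ≤ exp ((c * (t - s) - 1 - c * τ 0) * log θ) :=
    (Finset.abs_prod_le_pow_card _ _ fun k _ => hb k).trans <| by
      rw [Nat.card_Ico]
      exact pow_le_exp_mul_log hθ0 hθ1.le (by linarith)
  calc |transition a τ b t s|
      = exp (∫ r in s..t, a r) * |∏ k ∈ Finset.Ico J K, (1 + b k)| := by
        rw [transition_eq_prod_Ico hJ hK, abs_mul, abs_exp]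
    _ ≤ exp A * exp ((c * (t - s) - 1 - c * τ 0) * log θ) := by
        gcongr
        exact intervalIntegral_le_integral_Ici hapos hint hs hst
    _ = exp (A - (1 + c * τ 0) * log θ) * exp (-(-(c * log θ)) * (t - s)) := by
        rw [← exp_add, ← exp_add]
        ring_nf

theorem stmt_14_general (a : ℝ → ℝ) (τ b : ℕ → ℝ)
    (hτmono : StrictMono τ) (hτpos : ∀ k, 0 < τ k)
    (hτtop : Filter.Tendsto τ Filter.atTop Filter.atTop)
    (hapos : ∀ t ≥ (0 : ℝ), 0 ≤ a t)
    (hint : MeasureTheory.IntegrableOn a (Set.Ici 0))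
    (c : ℝ) (hc : 0 < c)
    (hgap : ∀ i j : ℕ, j < i → c ≤ ((i : ℝ) - (j : ℝ)) / (τ (i + 1) - τ j))
    (θ η : ℝ) (hθ0 : 0 < θ) (hθ1 : θ < 1)
    (hbk : ∀ k, η < |1 + b k| ∧ |1 + b k| ≤ θ) :
    (∃ N > (0 : ℝ), ∃ α₀ > (0 : ℝ), ∀ s t : ℝ, 0 ≤ s → s ≤ t →
      |transition a τ b t s| ≤ N * Real.exp (-α₀ * (t - s))) ∧
    ((∀ ε > (0 : ℝ), ∃ δ > (0 : ℝ), ∀ s₀ ≥ (0 : ℝ), ∀ x₀ : ℝ, |x₀| < δ →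
        ∀ t ≥ s₀, |transition a τ b t s₀ * x₀| < ε) ∧
      (∃ δ₀ > (0 : ℝ), ∀ ε > (0 : ℝ), ∃ T ≥ (0 : ℝ), ∀ s₀ ≥ (0 : ℝ), ∀ x₀ : ℝ, |x₀| < δ₀ →
        ∀ t ≥ s₀ + T, |transition a τ b t s₀ * x₀| < ε)) := by
  obtain ⟨N, hN, α₀, hα₀, hbound⟩ := exists_abs_transition_le_exp hτmono (hτpos 0).le hτtop
    hapos hint hc hgap hθ0 hθ1 fun k => (hbk k).2
  exact ⟨⟨N, hN, α₀, hα₀, hbound⟩, uniformlyStable_of_exp_bound hN hα₀.le hbound,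
    uniformlyAttractive_of_exp_bound hN hα₀ hbound⟩

/-- If `a ≥ 0` is Lebesgue integrable on `[0,∞)`, the impulse times satisfy
`(i - j)/(τ_{i+1} - τ_j) ≥ c > 0` for all `j < i`, and `η < |1 + b_k| ≤ θ` with `θ, η ∈ (0,1)`,
then the transition function admits a uniform exponential bound; in particular the trivial
solution of the corresponding scalar homogeneous GLDE is uniformly asymptotically stable. -/
theorem stmt_14 (a : ℝ → ℝ) (τ b : ℕ → ℝ)
    (hτmono : StrictMono τ) (hτpos : ∀ k, 0 < τ k)
    (hτtop : Filter.Tendsto τ Filter.atTop Filter.atTop)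
    (hb : ∀ k, 1 + b k ≠ 0)
    (hapos : ∀ t ≥ (0 : ℝ), 0 ≤ a t)
    (hint : MeasureTheory.IntegrableOn a (Set.Ici 0))
    (c : ℝ) (hc : 0 < c)
    (hgap : ∀ i j : ℕ, j < i → c ≤ ((i : ℝ) - (j : ℝ)) / (τ (i + 1) - τ j))
    (θ η : ℝ) (hθ0 : 0 < θ) (hθ1 : θ < 1) (hη0 : 0 < η) (hη1 : η < 1)
    (hbk : ∀ k, η < |1 + b k| ∧ |1 + b k| ≤ θ) :
    (∃ N > (0 : ℝ), ∃ α₀ > (0 : ℝ), ∀ s t : ℝ, 0 ≤ s → s ≤ t →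
      |transition a τ b t s| ≤ N * Real.exp (-α₀ * (t - s))) ∧
    ((∀ ε > (0 : ℝ), ∃ δ > (0 : ℝ), ∀ s₀ ≥ (0 : ℝ), ∀ x₀ : ℝ, |x₀| < δ →
        ∀ t ≥ s₀, |transition a τ b t s₀ * x₀| < ε) ∧
      (∃ δ₀ > (0 : ℝ), ∀ ε > (0 : ℝ), ∃ T ≥ (0 : ℝ), ∀ s₀ ≥ (0 : ℝ), ∀ x₀ : ℝ, |x₀| < δ₀ →
        ∀ t ≥ s₀ + T, |transition a τ b t s₀ * x₀| < ε)) :=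
  stmt_14_general a τ b hτmono hτpos hτtop hapos hint c hc hgap θ η hθ0 hθ1 hbk
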